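/- For every Mockingbird term t, the equivalence class {s : s ≡ t} contains exactly one element m that is minimal in it with respect to ≼, i.e., exactly one m with m ≡ t such that every s with s ≡ t and s ≼ m satisfies s = m. -/

import Mathlib

/-- Mockingbird terms: the constant `M`, variables `x i`, and applications. -/
inductive MTerm : Type
  | M : MTerm
  | var : ℕ → MTerm
  | app : MTerm → MTerm → MTerm
  deriving DecidableEq

/-- The one-step rewrite relation `⇒` on Mockingbird terms. -/
inductive Step : MTerm → MTerm → Prop
  | mock (t : MTerm) : Step (MTerm.app MTerm.M t) (MTerm.app t t)
  | left {t1 t1' : MTerm} (t2 : MTerm) :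
      Step t1 t1' → Step (MTerm.app t1 t2) (MTerm.app t1' t2)
  | right (t1 : MTerm) {t2 t2' : MTerm} :
      Step t2 t2' → Step (MTerm.app t1 t2) (MTerm.app t1 t2')

/-- `≼`, the reflexive-transitive closure of `⇒`. -/
def MLe : MTerm → MTerm → Prop := Relation.ReflTransGen Step

/-- `≡`, the reflexive-symmetric-transitive closure of `⇒`. -/
def MEquiv : MTerm → MTerm → Prop := Relation.EqvGen Step

/-- Strict version of `≼`. -/
def MLt (s t : MTerm) : Prop := MLe s t ∧ s ≠ t

/-- Covering relation for `≼`. -/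
def MCovBy (s t : MTerm) : Prop := MLt s t ∧ ∀ z, MLt s z → ¬ MLt z t

/-- Duplicative trees: white or black nodes with a list (forest) of children. -/
inductive DTree : Type
  | W : List DTree → DTree
  | B : List DTree → DTree

/-- The one-step relation `⋖` on duplicative forests. -/
inductive DStep : List DTree → List DTree → Prop
  | dup (g : List DTree) : DStep [DTree.W g] [DTree.B (g ++ g)]
  | white {g g' : List DTree} : DStep g g' → DStep [DTree.W g] [DTree.W g']
  | black {g g' : List DTree} : DStep g g' → DStep [DTree.B g] [DTree.B g']
  | head {t t' : DTree} (f : List DTree) : DStep [t] [t'] → DStep (t :: f) (t' :: f)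
  | tail (t : DTree) {f f' : List DTree} : DStep f f' → DStep (t :: f) (t :: f')

/-- `≪`, the reflexive-transitive closure of `⋖`. -/
def DLe : List DTree → List DTree → Prop := Relation.ReflTransGen DStep

/-- The map `fr` from Mockingbird terms to duplicative forests. -/
def fr : MTerm → List DTree
  | MTerm.M => []
  | MTerm.var _ => []
  | MTerm.app MTerm.M MTerm.M => [DTree.B []]
  | MTerm.app MTerm.M t' => [DTree.W (fr t')]
  | MTerm.app t t' => [DTree.B (fr t ++ fr t')]

mutual
  /-- The pruning map on duplicative trees (returns a forest). -/
  def prT : DTree → List DTree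
    | DTree.W g => [DTree.W (prF g)]
    | DTree.B g => prF g
  /-- The pruning map on duplicative forests. -/
  def prF : List DTree → List DTree
    | [] => []
    | t :: f => prT t ++ prF f
end

mutual
  /-- The statistic `mtStat` on duplicative trees. -/
  def mtStat : DTree → ℕ
    | DTree.W g => 2 * ml g
    | DTree.B g => ml g
  /-- Sum of `mtStat` over the trees of a forest. -/
  def mtsum : List DTree → ℕ
    | [] => 0
    | t :: f => mtStat t + mtsum f
  /-- The statistic `ml` on duplicative forests: `1 - ℓ + Σ mtStat`. -/
  def ml : List DTree → ℕ
    | f => mtsum f + 1 - f.length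
end

mutual
  /-- Number of white nodes in a duplicative tree. -/
  def whitesT : DTree → ℕ
    | DTree.W g => 1 + whitesF g
    | DTree.B g => whitesF g
  /-- Number of white nodes in a duplicative forest. -/
  def whitesF : List DTree → ℕ
    | [] => 0
    | t :: f => whitesT t + whitesF f
end

/-- Closed terms: no variables. -/
def MClosed : MTerm → Prop
  | MTerm.M => True
  | MTerm.var _ => False
  | MTerm.app a b => MClosed a ∧ MClosed b

/-- Degree: number of applications. -/
def deg : MTerm → ℕ
  | MTerm.M => 0
  | MTerm.var _ => 0
  | MTerm.app a b => deg a + deg b + 1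

/-- Subterm relation. -/
inductive Subterm : MTerm → MTerm → Prop
  | refl (t : MTerm) : Subterm t t
  | left {s a : MTerm} (b : MTerm) : Subterm s a → Subterm s (MTerm.app a b)
  | right (a : MTerm) {s b : MTerm} : Subterm s b → Subterm s (MTerm.app a b)

/-- The term `r_d`. -/
def rTerm : ℕ → MTerm
  | 0 => MTerm.M
  | d + 1 => MTerm.app MTerm.M (rTerm d)

/-- Saturated chain from `a` to `b`, given as the list of its elements. -/
def SatChain (a b : MTerm) (c : List MTerm) : Prop :=
  List.Chain' MCovBy c ∧ c.head? = some a ∧ c.getLast? = some b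

/-- variable-occurrence count -/
def vc : MTerm → ℕ
  | MTerm.M => 0
  | MTerm.var _ => 1
  | MTerm.app a b => vc a + vc b

lemma step_meas {b a : MTerm} (h : Step b a) :
    b = a ∨ vc b < vc a ∨ (vc b = vc a ∧ deg b < deg a) := by
  induction h with
  | mock t =>
    by_cases ht : t = MTerm.M
    · subst ht; left; rfl
    · right
      rcases Nat.eq_zero_or_pos (vc t) with h0 | hp
      · right
        refine ⟨by simp [vc, h0], ?_⟩
        cases t with
        | M => exact absurd rfl ht
        | var i => simp [vc] at h0
        | app x y => simp only [deg]; omega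
      · left; simp [vc]; omega
  | left t2 h ih =>
    rcases ih with rfl | h | ⟨h1, h2⟩
    · left; rfl
    · right; left; simp [vc]; omega
    · right; right; simp only [vc, deg]; omega
  | right t1 h ih =>
    rcases ih with rfl | h | ⟨h1, h2⟩
    · left; rfl
    · right; left; simp [vc]; omega
    · right; right; simp only [vc, deg]; omega

/-- proper expansion: `E a b` means `b` one-step-rewrites to `a` and differs from it. -/
def ExpRel (a b : MTerm) : Prop := Step b a ∧ b ≠ a

lemma wfE : WellFounded (fun b a : MTerm => ExpRel a b) := by
  have hs : Subrelation (fun b a : MTerm => ExpRel a b)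
      (InvImage (· < ·) (fun t => (toLex (vc t, deg t) : ℕ ×ₗ ℕ))) := by
    intro b a ⟨h, hne⟩
    rcases step_meas h with rfl | h1 | ⟨h1, h2⟩
    · exact absurd rfl hne
    · exact Prod.Lex.lt_iff.mpr (Or.inl h1)
    · exact Prod.Lex.lt_iff.mpr (Or.inr ⟨h1, h2⟩)
  exact Subrelation.wf hs (InvImage.wf _ wellFounded_lt)

lemma le_app_left {a a' : MTerm} (b : MTerm) (h : MLe a a') :
    MLe (MTerm.app a b) (MTerm.app a' b) := by
  induction h with
  | refl => exact Relation.ReflTransGen.refl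
  | tail _ h2 ih => exact ih.tail (Step.left b h2)

lemma le_app_right (a : MTerm) {b b' : MTerm} (h : MLe b b') :
    MLe (MTerm.app a b) (MTerm.app a b') := by
  induction h with
  | refl => exact Relation.ReflTransGen.refl
  | tail _ h2 ih => exact ih.tail (Step.right a h2)

/-- upward local confluence: two one-step predecessors of `a` have a common ancestor. -/
lemma local_conf {b a : MTerm} (h1 : Step b a) : ∀ {c : MTerm}, Step c a →
    ∃ d, MLe d b ∧ MLe d c := by
  induction h1 with
  | mock t =>
    intro c h2
    cases h2 with
    | mock => exact ⟨MTerm.app MTerm.M t, Relation.ReflTransGen.refl, Relation.ReflTransGen.refl⟩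
    | left _ hc =>
      rename_i c1
      refine ⟨MTerm.app MTerm.M c1, Relation.ReflTransGen.single (Step.right _ hc), ?_⟩
      exact Relation.ReflTransGen.head (Step.mock c1)
        (Relation.ReflTransGen.single (Step.right c1 hc))
    | right _ hc =>
      rename_i c2
      refine ⟨MTerm.app MTerm.M c2, Relation.ReflTransGen.single (Step.right _ hc), ?_⟩
      exact Relation.ReflTransGen.head (Step.mock c2)
        (Relation.ReflTransGen.single (Step.left c2 hc))
  | left t2 h ih =>
    rename_i t1 t1'
    intro c h2
    cases h2 with
    | mock =>
      refine ⟨MTerm.app MTerm.M t1, ?_, Relation.ReflTransGen.single (Step.right _ h)⟩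
      exact Relation.ReflTransGen.head (Step.mock t1)
        (Relation.ReflTransGen.single (Step.right t1 h))
    | left _ hc =>
      rename_i c1
      obtain ⟨d1, hd1, hd2⟩ := ih hc
      exact ⟨MTerm.app d1 t2, le_app_left t2 hd1, le_app_left t2 hd2⟩
    | right _ hc =>
      rename_i c2
      exact ⟨MTerm.app t1 c2, Relation.ReflTransGen.single (Step.right t1 hc),
        Relation.ReflTransGen.single (Step.left c2 h)⟩
  | right t1 h ih =>
    rename_i t2 t2'
    intro c h2
    cases h2 with
    | mock =>
      refine ⟨MTerm.app MTerm.M t2, ?_, Relation.ReflTransGen.single (Step.right _ h)⟩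
      exact Relation.ReflTransGen.head (Step.mock t2)
        (Relation.ReflTransGen.single (Step.left t2 h))
    | left _ hc =>
      rename_i c1
      exact ⟨MTerm.app c1 t2, Relation.ReflTransGen.single (Step.left t2 hc),
        Relation.ReflTransGen.single (Step.right c1 h)⟩
    | right _ hc =>
      rename_i c2
      obtain ⟨d2, hd1, hd2⟩ := ih hc
      exact ⟨MTerm.app t1 d2, le_app_right t1 hd1, le_app_right t1 hd2⟩

lemma exp_to_le {a b : MTerm} (h : Relation.ReflTransGen ExpRel a b) : MLe b a := by
  induction h with
  | refl => exact Relation.ReflTransGen.refl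
  | tail _ h2 ih => exact Relation.ReflTransGen.head h2.1 ih

lemma le_to_exp {b a : MTerm} (h : MLe b a) : Relation.ReflTransGen ExpRel a b := by
  induction h using Relation.ReflTransGen.head_induction_on with
  | refl => exact Relation.ReflTransGen.refl
  | head h1 _ ih =>
    rename_i s s₁ _
    by_cases he : s = s₁
    · exact he ▸ ih
    · exact ih.tail ⟨h1, he⟩

lemma newman : ∀ a b c : MTerm, Relation.ReflTransGen ExpRel a b →
    Relation.ReflTransGen ExpRel a c →
    ∃ d, Relation.ReflTransGen ExpRel b d ∧ Relation.ReflTransGen ExpRel c d := by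
  intro a
  induction a using WellFounded.induction wfE with
  | _ a ih =>
    intro b c hab hac
    rcases Relation.ReflTransGen.cases_head hab with rfl | ⟨a1, ha1, h1b⟩
    · exact ⟨c, hac, Relation.ReflTransGen.refl⟩
    rcases Relation.ReflTransGen.cases_head hac with rfl | ⟨a2, ha2, h2c⟩
    · exact ⟨b, Relation.ReflTransGen.refl, hab⟩
    obtain ⟨d0, hd1, hd2⟩ := local_conf ha1.1 ha2.1
    obtain ⟨e, hbe, hde⟩ := ih a1 ha1 b d0 h1b (le_to_exp hd1)
    obtain ⟨f, hcf, hef⟩ := ih a2 ha2 c e h2c ((le_to_exp hd2).trans hde)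
    exact ⟨f, hbe.trans hef, hcf⟩

lemma church_rosser {a b : MTerm} (h : MEquiv a b) :
    ∃ d, Relation.ReflTransGen ExpRel a d ∧ Relation.ReflTransGen ExpRel b d := by
  induction h with
  | rel x y hxy =>
    by_cases he : x = y
    · exact ⟨y, he ▸ Relation.ReflTransGen.refl, Relation.ReflTransGen.refl⟩
    · exact ⟨x, Relation.ReflTransGen.refl, Relation.ReflTransGen.single ⟨hxy, he⟩⟩
  | refl x => exact ⟨x, Relation.ReflTransGen.refl, Relation.ReflTransGen.refl⟩
  | symm x y _ ih => exact ⟨ih.choose, ih.choose_spec.2, ih.choose_spec.1⟩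
  | trans x y z _ _ ih1 ih2 =>
    obtain ⟨d1, hx1, hy1⟩ := ih1
    obtain ⟨d2, hy2, hz2⟩ := ih2
    obtain ⟨e, he1, he2⟩ := newman y d1 d2 hy1 hy2
    exact ⟨e, hx1.trans he1, hz2.trans he2⟩

lemma exists_nf (a : MTerm) :
    ∃ m, Relation.ReflTransGen ExpRel a m ∧ ∀ x, ¬ ExpRel m x := by
  induction a using WellFounded.induction wfE with
  | _ a ih =>
    by_cases h : ∃ x, ExpRel a x
    · obtain ⟨x, hx⟩ := h
      obtain ⟨m, hm1, hm2⟩ := ih x hx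
      exact ⟨m, Relation.ReflTransGen.head hx hm1, hm2⟩
    · exact ⟨a, Relation.ReflTransGen.refl, fun x hx => h ⟨x, hx⟩⟩

lemma le_to_equiv {a b : MTerm} (h : MLe a b) : MEquiv a b := by
  induction h with
  | refl => exact Relation.EqvGen.refl _
  | tail _ h2 ih => exact Relation.EqvGen.trans _ _ _ ih (Relation.EqvGen.rel _ _ h2)

/-- every `≡`-equivalence class contains exactly one element minimal in it
with respect to `≼`. -/
theorem mockingbird_unique_minimal (t : MTerm) :
    ∃! m : MTerm, MEquiv m t ∧ ∀ s, MEquiv s t → MLe s m → s = m := by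
  obtain ⟨m, hm, hnf⟩ := exists_nf t
  have hmt : MEquiv m t := le_to_equiv (exp_to_le hm)
  refine ⟨m, ⟨hmt, ?_⟩, ?_⟩
  · intro s _ hsm
    rcases Relation.ReflTransGen.cases_head (le_to_exp hsm) with rfl | ⟨x, hx, _⟩
    · rfl
    · exact absurd hx (hnf x)
  · rintro m' ⟨hm't, hmin'⟩
    have hnf' : ∀ x, ¬ ExpRel m' x := by
      rintro x ⟨hs, hne⟩
      exact hne (hmin' x (Relation.EqvGen.trans _ _ _ (Relation.EqvGen.rel _ _ hs) hm't)
        (Relation.ReflTransGen.single hs))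
    have : MEquiv m' m := Relation.EqvGen.trans _ _ _ hm't (Relation.EqvGen.symm _ _ hmt)
    obtain ⟨d, hd1, hd2⟩ := church_rosser this
    rcases Relation.ReflTransGen.cases_head hd1 with rfl | ⟨x, hx, _⟩
    · rcases Relation.ReflTransGen.cases_head hd2 with h | ⟨x, hx, _⟩
      · exact h.symm
      · exact absurd hx (hnf x)
    · exact absurd hx (hnf' x)
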